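/- A finitely presented group A has all of its quotient groups finitely presented if and only if A satisfies the ascending chain condition on normal subgroups. -/

import Mathlib

/-- A group is finitely presented if it is the quotient of a finitely generated free group
by the normal closure of a finite set. -/
def Group.IsFinitelyPresentedFin (A : Type*) [Group A] : Prop :=
  ∃ (n : ℕ) (π : FreeGroup (Fin n) →* A), Function.Surjective π ∧
    ∃ s : Finset (FreeGroup (Fin n)), Subgroup.normalClosure ↑s = π.ker

/-!
Both sides are equivalent to every normal subgroup of `A` being the normal closure of a finite set.
For quotients this is B. H. Neumann's observation that, `A` being finitely generated, whether
`A ⧸ N` is finitely presented does not depend on the chosen finite generating set (a Tietze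
transformation), together with the fact that adding finitely many relators to a finite presentation
keeps it finite. For ACC it is the Noetherian argument: the normal closure of a finite set inside
the union of a chain already lies in one member, and conversely, under ACC, a maximal finitely
normally generated normal subgroup below `N` must be `N`.
-/

open Function Subgroup

theorem Group.isFinitelyPresentedFin_iff (A : Type*) [Group A] :
    Group.IsFinitelyPresentedFin A ↔ Group.IsFinitelyPresented A := by
  simp only [Group.IsFinitelyPresentedFin, Group.isFinitelyPresented_iff,
    IsFinitelyNormallyGenerated, Set.exists_finite_iff_finset]

theorem FreeGroup.exists_comp_eq_of_surjective {α K H : Type*} [Group K] [Group H]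
    {ρ : K →* H} (hρ : Surjective ρ) (φ : FreeGroup α →* H) :
    ∃ ψ : FreeGroup α →* K, ρ.comp ψ = φ :=
  ⟨FreeGroup.lift fun a => surjInv hρ (φ (.of a)),
    FreeGroup.ext_hom _ _ fun a => by simp [surjInv_eq hρ]⟩

def Group.NormalSubgroupACC (G : Type*) [Group G] : Prop :=
  ∀ c : ℕ → Subgroup G, (∀ n, (c n).Normal) → Monotone c → ∃ N, ∀ m, N ≤ m → c m = c N

section

variable {G : Type*} [Group G]

theorem Subgroup.IsFinitelyNormallyGenerated.exists_le_of_le_iSup {ι : Type*} [Nonempty ι]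
    {N : Subgroup G} (hN : N.IsFinitelyNormallyGenerated) {c : ι → Subgroup G}
    [∀ i, (c i).Normal] (hc : Directed (· ≤ ·) c) (hNc : N ≤ ⨆ i, c i) :
    ∃ i, N ≤ c i := by
  obtain ⟨S, hS, rfl⟩ := hN
  have hmem (s : S) : ∃ i, (s : G) ∈ c i :=
    (mem_iSup_of_directed hc).1 (hNc (subset_normalClosure s.2))
  choose idx hidx using hmem
  have : Finite S := hS
  obtain ⟨i, hi⟩ := hc.finite_le idx
  exact ⟨i, normalClosure_le_normal fun s hs => hi ⟨s, hs⟩ (hidx ⟨s, hs⟩)⟩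

theorem Group.normalSubgroupACC_of_forall_isFinitelyNormallyGenerated
    (h : ∀ N : Subgroup G, N.Normal → N.IsFinitelyNormallyGenerated) :
    Group.NormalSubgroupACC G := by
  intro c hc hmono
  obtain ⟨K, hK⟩ := (h _ (iSup_normal c)).exists_le_of_le_iSup hmono.directed_le le_rfl
  exact ⟨K, fun m hm => le_antisymm ((le_iSup c m).trans hK) (hmono hm)⟩

theorem Group.NormalSubgroupACC.wellFoundedGT (h : Group.NormalSubgroupACC G) :
    WellFoundedGT {N : Subgroup G // N.Normal} := by
  rw [wellFoundedGT_iff_monotone_chain_condition]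
  intro a
  obtain ⟨n, hn⟩ := h (fun n => (a n).1) (fun n => (a n).2) fun m n hmn => a.monotone hmn
  exact ⟨n, fun m hm => Subtype.ext (hn m hm).symm⟩

theorem Group.NormalSubgroupACC.isFinitelyNormallyGenerated (h : Group.NormalSubgroupACC G)
    (N : Subgroup G) [N.Normal] : N.IsFinitelyNormallyGenerated := by
  have := h.wellFoundedGT
  obtain ⟨⟨M, _⟩, ⟨hMN, T, hT, rfl⟩, hmax⟩ := wellFounded_gt.has_min
    {M : {N : Subgroup G // N.Normal} | M.1 ≤ N ∧ M.1.IsFinitelyNormallyGenerated}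
    ⟨⟨⊥, inferInstance⟩, bot_le, .bot⟩
  refine ⟨T, hT, le_antisymm hMN fun x hx => ?_⟩
  have hle : normalClosure T ≤ normalClosure (insert x T) :=
    normalClosure_mono (Set.subset_insert x T)
  have heq := eq_of_le_of_not_lt hle (hmax ⟨_, normalClosure_normal⟩
    ⟨normalClosure_le_normal (Set.insert_subset hx (subset_normalClosure.trans hMN)),
      _, hT.insert x, rfl⟩)
  exact heq ▸ subset_normalClosure (Set.mem_insert x T)

theorem Group.normalSubgroupACC_iff_forall_isFinitelyNormallyGenerated :
    Group.NormalSubgroupACC G ↔ ∀ N : Subgroup G, N.Normal → N.IsFinitelyNormallyGenerated :=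
  ⟨fun h _ _ => h.isFinitelyNormallyGenerated _,
    normalSubgroupACC_of_forall_isFinitelyNormallyGenerated⟩

end

/-- A Tietze transformation: the relators of `H` with respect to `ρ`, transported along `τ`,
together with one relator per generator identifying it with its image under `τ ∘ σ`, present `H`
with respect to `φ`. -/
theorem FreeGroup.ker_eq_normalClosure_of_comp_eq {α F H : Type*} [Group F] [Group H]
    {φ : FreeGroup α →* H} {ρ : F →* H} {σ : FreeGroup α →* F} {τ : F →* FreeGroup α}
    (hσ : ρ.comp σ = φ) (hτ : φ.comp τ = ρ) {t : Set F} (ht : normalClosure t = ρ.ker) :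
    φ.ker = normalClosure
      (Set.range (fun a => (FreeGroup.of a)⁻¹ * τ (σ (FreeGroup.of a))) ∪ τ '' t) := by
  set M := normalClosure
    (Set.range (fun a => (FreeGroup.of a)⁻¹ * τ (σ (FreeGroup.of a))) ∪ τ '' t)
  refine le_antisymm (fun x hx => ?_) (normalClosure_le_normal ?_)
  · have hgen (a : α) : (FreeGroup.of a)⁻¹ * τ (σ (FreeGroup.of a)) ∈ M :=
      subset_normalClosure (Set.mem_union_left _ (Set.mem_range_self a))
    have hτσ : (QuotientGroup.mk' M).comp (τ.comp σ) = QuotientGroup.mk' M :=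
      FreeGroup.ext_hom _ _ fun a => (QuotientGroup.eq.2 (hgen a)).symm
    have hσx : σ x ∈ normalClosure t := by
      rwa [ht, MonoidHom.mem_ker, ← MonoidHom.comp_apply, hσ]
    have hτσx : τ (σ x) ∈ M :=
      normalClosure_mono Set.subset_union_right (map_normalClosure_le t τ ⟨σ x, hσx, rfl⟩)
    have hmk : (x : FreeGroup α ⧸ M) = τ (σ x) := (DFunLike.congr_fun hτσ x).symm
    rwa [← QuotientGroup.eq_one_iff, hmk, QuotientGroup.eq_one_iff]
  · have hφτσ (x : FreeGroup α) : φ (τ (σ x)) = φ x :=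
      (DFunLike.congr_fun hτ (σ x)).trans (DFunLike.congr_fun hσ x)
    rintro _ (⟨a, rfl⟩ | ⟨w, hw, rfl⟩)
    · simp [hφτσ]
    · rw [SetLike.mem_coe, MonoidHom.mem_ker, ← MonoidHom.comp_apply, hτ, ← MonoidHom.mem_ker,
        ← ht]
      exact subset_normalClosure hw

theorem Group.IsFinitelyPresented.isFinitelyNormallyGenerated_ker {α H : Type*} [Group H]
    [Finite α] [Group.IsFinitelyPresented H] {φ : FreeGroup α →* H} (hφ : Surjective φ) :
    φ.ker.IsFinitelyNormallyGenerated := by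
  obtain ⟨n, ρ, hρ, t, ht, hker⟩ := ‹Group.IsFinitelyPresented H›
  obtain ⟨σ, hσ⟩ := FreeGroup.exists_comp_eq_of_surjective hρ φ
  obtain ⟨τ, hτ⟩ := FreeGroup.exists_comp_eq_of_surjective hφ ρ
  exact ⟨_, (Set.finite_range _).union (ht.image τ),
    (FreeGroup.ker_eq_normalClosure_of_comp_eq hσ hτ hker).symm⟩

theorem Subgroup.IsFinitelyNormallyGenerated.of_isFinitelyPresented_quotient {G : Type*}
    [Group G] [Group.FG G] (N : Subgroup G) [N.Normal] [Group.IsFinitelyPresented (G ⧸ N)] :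
    N.IsFinitelyNormallyGenerated := by
  obtain ⟨α, _, π, hπ⟩ := Group.fg_iff_exists_freeGroup_hom_surjective_finite.1 ‹Group.FG G›
  have hker := Group.IsFinitelyPresented.isFinitelyNormallyGenerated_ker
    (φ := (QuotientGroup.mk' N).comp π) ((QuotientGroup.mk'_surjective N).comp hπ)
  rw [← MonoidHom.comap_ker, QuotientGroup.ker_mk'] at hker
  simpa only [map_comap_eq_self_of_surjective hπ] using hker.map hπ

theorem Group.IsFinitelyPresented.fg (G : Type*) [Group G] [Group.IsFinitelyPresented G] :
    Group.FG G := by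
  obtain ⟨n, π, hπ, -⟩ := ‹Group.IsFinitelyPresented G›
  exact Group.fg_of_surjective hπ

theorem all_quotients_fp_iff_acc_on_normal_subgroups
    {A : Type*} [Group A] (hAfp : Group.IsFinitelyPresentedFin A) :
    (∀ (N : Subgroup A) [N.Normal], Group.IsFinitelyPresentedFin (A ⧸ N)) ↔
      (∀ c : ℕ → Subgroup A, (∀ n, (c n).Normal) → Monotone c →
        ∃ N, ∀ m, N ≤ m → c m = c N) := by
  have := (Group.isFinitelyPresentedFin_iff A).1 hAfp
  have := Group.IsFinitelyPresented.fg A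
  simp only [Group.isFinitelyPresentedFin_iff]
  change _ ↔ Group.NormalSubgroupACC A
  rw [Group.normalSubgroupACC_iff_forall_isFinitelyNormallyGenerated]
  refine ⟨fun h N _ => ?_, fun h N _ => .quotient N (h N ‹_›)⟩
  have := h N
  exact .of_isFinitelyPresented_quotient N
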